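/- arXiv:math/0206260 — 6 statements merged into one kernel-verified Lean document; each statement's English description precedes it below -/
import Mathlib

section
/- Points c₁, ..., c_{n+1} in ℂⁿ (n ≥ 1) are affinely dependent if and only if their Cayley–Menger determinant equals 0, i.e. the determinant of the (n+2)×(n+2) matrix M with M₀₀ = 0, M₀ⱼ = Mⱼ₀ = 1 for 1 ≤ j ≤ n+1, and Mᵢⱼ = φₙ(cᵢ, cⱼ) for 1 ≤ i, j ≤ n+1, equals 0. -/
/-- `φₙ(x,y) = (x₁−y₁)² + ... + (xₙ−yₙ)²` for `x, y ∈ ℂⁿ`. -/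
noncomputable def phiC (n : ℕ) (x y : Fin n → ℂ) : ℂ := ∑ i, (x i - y i) ^ 2

/-- The Cayley–Menger matrix of `m` points in `ℂⁿ`: the `(m+1)×(m+1)` matrix `M` with
`M₀₀ = 0`, `M₀ⱼ = Mⱼ₀ = 1` for `1 ≤ j ≤ m`, and `Mᵢⱼ = φₙ(cᵢ, cⱼ)` for `1 ≤ i, j ≤ m`. -/
noncomputable def cayleyMenger (n m : ℕ) (c : Fin m → (Fin n → ℂ)) :
    Matrix (Fin (m + 1)) (Fin (m + 1)) ℂ :=
  Matrix.of (Fin.cases (Fin.cons 0 fun _ => 1)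
    (fun i => Fin.cons 1 fun j => phiC n (c i) (c j)))

/-!
Since `φ(x, y) = x ⬝ᵥ x + y ⬝ᵥ y - 2 x ⬝ᵥ y`, the Cayley–Menger matrix factors as `L Rᵀ`,
where `L` has rows `(0, 1, 0)` and `(1, cᵢ ⬝ᵥ cᵢ, cᵢ)` and `R` has rows `(1, 0, 0)` and
`(cⱼ ⬝ᵥ cⱼ, 1, -2 cⱼ)`. Expanding along the first rows, `det L = -det H` and `det R = (-2)ⁿ det H`,
where `H` has rows `(1, cᵢ)`, the homogeneous coordinates of the points. Hence the Cayley–Menger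
determinant is `-(-2)ⁿ (det H)²`, and `det H ≠ 0` exactly when the lifted points `(1, cᵢ)` are
linearly independent, i.e. when the `cᵢ` are affinely independent.
-/

open Matrix

theorem Matrix.det_succ_of_row_zero_eq_single {R : Type*} [CommRing R] {k : ℕ}
    (M : Matrix (Fin (k + 1)) (Fin (k + 1)) R) (j : Fin (k + 1)) (h : M 0 = Pi.single j 1) :
    M.det = (-1) ^ (j : ℕ) * (M.submatrix Fin.succ j.succAbove).det := by
  rw [det_succ_row_zero, Fintype.sum_eq_single j fun j' hj' => by simp [h, hj']]
  simp [h]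

theorem sum_smul_vecCons {K ι : Type*} [Semiring K] {n : ℕ} (s : Finset ι) (g : ι → K)
    (a : ι → K) (v : ι → Fin n → K) :
    ∑ i ∈ s, g i • vecCons (a i) (v i) = vecCons (∑ i ∈ s, g i * a i) (∑ i ∈ s, g i • v i) := by
  ext j
  induction j using Fin.cases <;> simp [Finset.sum_apply]

theorem affineIndependent_iff_linearIndependent_vecCons_one {K ι : Type*} [Ring K] {n : ℕ}
    {p : ι → Fin n → K} :
    AffineIndependent K p ↔ LinearIndependent K fun i => vecCons 1 (p i) := by
  simp only [affineIndependent_iff, linearIndependent_iff', sum_smul_vecCons, mul_one,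
    cons_eq_zero_iff, and_imp]

def homogeneousCoords {R : Type*} [One R] {m n : ℕ} (c : Fin m → Fin n → R) :
    Matrix (Fin m) (Fin (n + 1)) R :=
  of fun i => vecCons 1 (c i)

theorem det_homogeneousCoords_ne_zero_iff {K : Type*} [Field K] {n : ℕ}
    (c : Fin (n + 1) → Fin n → K) :
    (homogeneousCoords c).det ≠ 0 ↔ AffineIndependent K c := by
  rw [affineIndependent_iff_linearIndependent_vecCons_one, ← isUnit_iff_ne_zero,
    ← isUnit_iff_isUnit_det, ← linearIndependent_rows_iff_isUnit]
  rfl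

theorem phiC_eq_dotProduct (n : ℕ) (x y : Fin n → ℂ) :
    phiC n x y = x ⬝ᵥ x + y ⬝ᵥ y - 2 * x ⬝ᵥ y := by
  simp only [phiC, dotProduct, Finset.mul_sum, ← Finset.sum_add_distrib,
    ← Finset.sum_sub_distrib]
  exact Finset.sum_congr rfl fun i _ => by ring

section Factorization

variable {n m : ℕ} (c : Fin m → Fin n → ℂ)

def cayleyMengerLeft : Matrix (Fin (m + 1)) (Fin (n + 2)) ℂ :=
  of (Fin.cases (Pi.single 1 1) fun i => vecCons 1 (vecCons (c i ⬝ᵥ c i) (c i)))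

def cayleyMengerRight : Matrix (Fin (m + 1)) (Fin (n + 2)) ℂ :=
  of (Fin.cases (Pi.single 0 1) fun j => vecCons (c j ⬝ᵥ c j) (vecCons 1 ((-2 : ℂ) • c j)))

theorem cayleyMenger_eq_mul_transpose :
    cayleyMenger n m c = cayleyMengerLeft c * (cayleyMengerRight c)ᵀ := by
  ext i j
  change _ = (fun k => cayleyMengerLeft c i k) ⬝ᵥ fun k => cayleyMengerRight c j k
  induction i using Fin.cases <;> induction j using Fin.cases <;>
    simp [cayleyMenger, cayleyMengerLeft, cayleyMengerRight, phiC_eq_dotProduct]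
  ring

end Factorization

section Determinants

variable {n : ℕ} (c : Fin (n + 1) → Fin n → ℂ)

theorem det_cayleyMengerLeft :
    (cayleyMengerLeft c).det = -(homogeneousCoords c).det := by
  rw [det_succ_of_row_zero_eq_single _ 1 rfl, Fin.val_one, pow_one, neg_one_mul]
  congr 2
  ext i j
  induction j using Fin.cases <;> simp [cayleyMengerLeft, homogeneousCoords]

theorem det_cayleyMengerRight :
    (cayleyMengerRight c).det = (-2) ^ n * (homogeneousCoords c).det := by
  have minor : (cayleyMengerRight c).submatrix Fin.succ Fin.succ =
      of fun i j => vecCons 1 (fun _ => -2) j * homogeneousCoords c i j := by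
    ext i j
    induction j using Fin.cases <;> simp [cayleyMengerRight, homogeneousCoords]
  rw [det_succ_of_row_zero_eq_single _ 0 rfl, Fin.val_zero, pow_zero, one_mul, Fin.succAbove_zero,
    minor, det_mul_row]
  simp [Fin.prod_univ_succ]

end Determinants

theorem det_cayleyMenger {n : ℕ} (c : Fin (n + 1) → Fin n → ℂ) :
    (cayleyMenger n (n + 1) c).det = -(-2) ^ n * (homogeneousCoords c).det ^ 2 := by
  rw [cayleyMenger_eq_mul_transpose, det_mul, det_transpose, det_cayleyMengerLeft,
    det_cayleyMengerRight]
  ring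

theorem cayleyMenger_det_eq_zero_iff_not_affineIndependent_general
    (n : ℕ) (c : Fin (n + 1) → (Fin n → ℂ)) :
    ¬ AffineIndependent ℂ c ↔ (cayleyMenger n (n + 1) c).det = 0 := by
  rw [det_cayleyMenger, ← det_homogeneousCoords_ne_zero_iff, not_not]
  simp

theorem cayleyMenger_det_eq_zero_iff_not_affineIndependent
    (n : ℕ) (hn : 1 ≤ n) (c : Fin (n + 1) → (Fin n → ℂ)) :
    ¬ AffineIndependent ℂ c ↔ (cayleyMenger n (n + 1) c).det = 0 :=
  cayleyMenger_det_eq_zero_iff_not_affineIndependent_general n c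
end

section
/- If c₁, c₂, c₃ ∈ ℂ² and φ(c₁,c₂) = φ(c₁,c₃) = φ(c₂,c₃) is a common value lying in the positive reals (0,∞), then c₁, c₂, c₃ are affinely independent. -/
/-- `φ(p,q) = (p₁−q₁)² + (p₂−q₂)²` for `p, q ∈ ℂ²`. -/
noncomputable def phi2 (p q : Fin 2 → ℂ) : ℂ := (p 0 - q 0) ^ 2 + (p 1 - q 1) ^ 2

theorem affineIndependent_of_equilateral (c₁ c₂ c₃ : Fin 2 → ℂ) (r : ℝ) (hr : 0 < r)
    (h12 : phi2 c₁ c₂ = r) (h13 : phi2 c₁ c₃ = r) (h23 : phi2 c₂ c₃ = r) :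
    AffineIndependent ℂ ![c₁, c₂, c₃] := by
  rw [affineIndependent_iff_not_collinear]
  intro hcol
  rw [collinear_iff_exists_forall_eq_smul_vadd] at hcol
  obtain ⟨p₀, v, hv⟩ := hcol
  obtain ⟨a, ha⟩ := hv c₁ (Set.mem_range.2 ⟨0, rfl⟩)
  obtain ⟨b, hb⟩ := hv c₂ (Set.mem_range.2 ⟨1, rfl⟩)
  obtain ⟨c, hc⟩ := hv c₃ (Set.mem_range.2 ⟨2, rfl⟩)
  set s : ℂ := v 0 ^ 2 + v 1 ^ 2 with hs
  have e1 : (a - b) ^ 2 * s = (r : ℂ) := by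
    rw [← h12, ha, hb]; simp [phi2, hs]; ring
  have e2 : (a - c) ^ 2 * s = (r : ℂ) := by
    rw [← h13, ha, hc]; simp [phi2, hs]; ring
  have e3 : (b - c) ^ 2 * s = (r : ℂ) := by
    rw [← h23, hb, hc]; simp [phi2, hs]; ring
  set x : ℂ := a - b
  set y : ℂ := a - c
  have e3' : (y - x) ^ 2 * s = (r : ℂ) := by
    have : b - c = y - x := by ring
    rw [← this]; exact e3
  have hxy : 2 * x * y * s = (r : ℂ) := by linear_combination e1 + e2 - e3'
  have h3r : 3 * (r : ℂ) ^ 2 = 0 := by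
    linear_combination (-4 * y ^ 2 * s) * e1 - (4 * (r : ℂ)) * e2 +
      (2 * x * y * s + (r : ℂ)) * hxy
  have : (r : ℂ) = 0 := by
    have := mul_eq_zero.1 h3r
    rcases this with h | h
    · norm_num at h
    · exact pow_eq_zero_iff (by norm_num) |>.1 h
  exact hr.ne' (by exact_mod_cast this)
end

section
/- If d > 0 is real, c₁, c₂, c₃ ∈ ℂ², φ(c₁,c₂) = 2d², φ(c₁,c₃) = 3d², and φ(c₂,c₃) = 9d², then c₁, c₂, c₃ are affinely independent. -/
theorem affineIndependent_of_dists (d : ℝ) (hd : 0 < d) (c₁ c₂ c₃ : Fin 2 → ℂ)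
    (h12 : phi2 c₁ c₂ = 2 * (d : ℂ) ^ 2) (h13 : phi2 c₁ c₃ = 3 * (d : ℂ) ^ 2)
    (h23 : phi2 c₂ c₃ = 9 * (d : ℂ) ^ 2) :
    AffineIndependent ℂ ![c₁, c₂, c₃] := by
  rw [affineIndependent_iff_not_collinear_set]
  intro hcol
  obtain ⟨v, hv⟩ := (collinear_iff_of_mem
    (show c₁ ∈ ({c₁, c₂, c₃} : Set (Fin 2 → ℂ)) by simp)).mp hcol
  obtain ⟨a, ha⟩ := hv c₂ (by simp)
  obtain ⟨b, hb⟩ := hv c₃ (by simp)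
  have hd' : (d : ℂ) ≠ 0 := by exact_mod_cast hd.ne'
  set V := v 0 ^ 2 + v 1 ^ 2 with hV
  have e12 : a ^ 2 * V = 2 * (d : ℂ) ^ 2 := by
    rw [← h12, ha]
    simp only [phi2, Pi.add_apply, Pi.smul_apply, smul_eq_mul, vadd_eq_add, hV]
    ring
  have e13 : b ^ 2 * V = 3 * (d : ℂ) ^ 2 := by
    rw [← h13, hb]
    simp only [phi2, Pi.add_apply, Pi.smul_apply, smul_eq_mul, vadd_eq_add, hV]
    ring
  have e23 : (a - b) ^ 2 * V = 9 * (d : ℂ) ^ 2 := by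
    rw [← h23, ha, hb]
    simp only [phi2, Pi.add_apply, Pi.smul_apply, smul_eq_mul, vadd_eq_add, hV]
    ring
  have key : 2 * a * b * V = -4 * (d : ℂ) ^ 2 := by
    linear_combination e12 + e13 - e23
  have final : (8 : ℂ) * (d : ℂ) ^ 4 = 0 := by
    linear_combination (2 * a * b * V - 4 * (d : ℂ) ^ 2) * key
      - 4 * (b ^ 2 * V) * e12 - 8 * (d : ℂ) ^ 2 * e13
  have h4 : (d : ℂ) ^ 4 = 0 := by linear_combination final / 8
  exact hd' ((pow_eq_zero_iff (n := 4) (by norm_num)).mp h4)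
end

section
/- If d ∈ D then √3 · d ∈ D. -/
/-- `D` is the set of real `d > 0` such that for all `x, y ∈ ℝ²` with `|x−y| = d` there is a
finite set `S` with `{x,y} ⊆ S ⊆ ℝ²` such that every map `f : S → ℂ²` preserving unit
distance (i.e. `φ(f u, f v) = 1` whenever `u, v ∈ S` and `|u−v| = 1`) satisfies
`φ(f x, f y) = d²`. -/
noncomputable def D : Set ℝ :=
  {d | 0 < d ∧ ∀ x y : EuclideanSpace ℝ (Fin 2), dist x y = d →
    ∃ S : Set (EuclideanSpace ℝ (Fin 2)), S.Finite ∧ x ∈ S ∧ y ∈ S ∧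
      ∀ f : EuclideanSpace ℝ (Fin 2) → (Fin 2 → ℂ),
        (∀ u ∈ S, ∀ v ∈ S, dist u v = 1 → phi2 (f u) (f v) = 1) →
        phi2 (f x) (f y) = (d : ℂ) ^ 2}

section Aux

abbrev E2 := EuclideanSpace ℝ (Fin 2)

noncomputable def mk2 (A B : ℝ) : E2 := (WithLp.equiv 2 (Fin 2 → ℝ)).symm ![A, B]

lemma mk2_0 (A B : ℝ) : mk2 A B 0 = A := rfl
lemma mk2_1 (A B : ℝ) : mk2 A B 1 = B := rfl

lemma dist_coord (p q : E2) : dist p q = Real.sqrt ((p 0 - q 0)^2 + (p 1 - q 1)^2) := by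
  rw [EuclideanSpace.dist_eq]
  congr 1
  simp [Fin.sum_univ_two, Real.dist_eq, sq_abs]

lemma dist_of_sq (p q : E2) (d : ℝ) (hd : 0 ≤ d)
    (h : (p 0 - q 0)^2 + (p 1 - q 1)^2 = d^2) : dist p q = d := by
  rw [dist_coord, h, Real.sqrt_sq hd]

lemma sq_of_dist (p q : E2) (d : ℝ) (h : dist p q = d) :
    (p 0 - q 0)^2 + (p 1 - q 1)^2 = d^2 := by
  rw [dist_coord] at h
  have hnn : (0:ℝ) ≤ (p 0 - q 0)^2 + (p 1 - q 1)^2 := by positivity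
  rw [← h, Real.sq_sqrt hnn]

lemma alg1 (t d v0 v1 : ℝ) (ht2 : t^2 = 3) (ht0 : t ≠ 0) (hv : v0^2 + v1^2 = 3*d^2) :
    (v0/2 - v1/(2*t))^2 + (v1/2 + v0/(2*t))^2 = d^2 := by
  field_simp
  nlinarith [hv, ht2]

lemma alg2 (t d v0 v1 : ℝ) (ht2 : t^2 = 3) (ht0 : t ≠ 0) (hv : v0^2 + v1^2 = 3*d^2) :
    (v1/t)^2 + (v0/t)^2 = d^2 := by
  field_simp
  nlinarith [hv, ht2]

lemma rhombus_exists (d : ℝ) (hd : 0 < d) (x q : E2) (hxq : dist x q = Real.sqrt 3 * d) :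
    ∃ a b : E2, dist x a = d ∧ dist x b = d ∧ dist a b = d ∧ dist a q = d ∧ dist b q = d := by
  have ht2 : (Real.sqrt 3)^2 = 3 := Real.sq_sqrt (by norm_num)
  have ht0 : Real.sqrt 3 ≠ 0 := by positivity
  set t := Real.sqrt 3 with ht
  obtain ⟨v0, hq0⟩ : ∃ v0, q 0 = x 0 + v0 := ⟨q 0 - x 0, by ring⟩
  obtain ⟨v1, hq1⟩ : ∃ v1, q 1 = x 1 + v1 := ⟨q 1 - x 1, by ring⟩
  have hv : v0^2 + v1^2 = 3 * d^2 := by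
    have h := sq_of_dist x q (t * d) hxq
    rw [hq0, hq1, mul_pow, ht2] at h
    linear_combination h
  refine ⟨mk2 (x 0 + v0/2 - v1/(2*t)) (x 1 + v1/2 + v0/(2*t)),
          mk2 (x 0 + v0/2 + v1/(2*t)) (x 1 + v1/2 - v0/(2*t)), ?_, ?_, ?_, ?_, ?_⟩ <;>
    refine dist_of_sq _ _ d hd.le ?_ <;>
    simp only [mk2_0, mk2_1, hq0, hq1]
  · linear_combination alg1 t d v0 v1 ht2 ht0 hv
  · linear_combination alg1 t d v0 (-v1) ht2 ht0 (by linear_combination hv)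
  · linear_combination alg2 t d v0 v1 ht2 ht0 hv
  · linear_combination alg1 t d v0 (-v1) ht2 ht0 (by linear_combination hv)
  · linear_combination alg1 t d v0 v1 ht2 ht0 hv

lemma aux_point_exists (d : ℝ) (hd : 0 < d) (x y : E2) (hxy : dist x y = Real.sqrt 3 * d) :
    ∃ y' : E2, dist x y' = Real.sqrt 3 * d ∧ dist y y' = d := by
  have ht2 : (Real.sqrt 3)^2 = 3 := Real.sq_sqrt (by norm_num)
  set t := Real.sqrt 3 with ht
  have hs2 : (Real.sqrt 11)^2 = 11 := Real.sq_sqrt (by norm_num)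
  set s := Real.sqrt 11 with hs
  obtain ⟨v0, hq0⟩ : ∃ v0, y 0 = x 0 + v0 := ⟨y 0 - x 0, by ring⟩
  obtain ⟨v1, hq1⟩ : ∃ v1, y 1 = x 1 + v1 := ⟨y 1 - x 1, by ring⟩
  have hv : v0^2 + v1^2 = 3 * d^2 := by
    have h := sq_of_dist x y (t * d) hxy
    rw [hq0, hq1, mul_pow, ht2] at h
    linear_combination h
  refine ⟨mk2 (x 0 + (5*v0 - s*v1)/6) (x 1 + (5*v1 + s*v0)/6), ?_, ?_⟩
  · refine dist_of_sq _ _ (t*d) (by positivity) ?_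
    simp only [mk2_0, mk2_1]
    rw [mul_pow, ht2]
    linear_combination ((25 + s^2)/36) * hv + (d^2/12) * hs2
  · refine dist_of_sq _ _ d hd.le ?_
    simp only [mk2_0, mk2_1, hq0, hq1]
    linear_combination ((1 + s^2)/36) * hv + (d^2/12) * hs2

lemma rhombus_alg (d : ℂ) (hd : d ≠ 0) (p a b q : Fin 2 → ℂ)
    (h1 : phi2 p a = d^2) (h2 : phi2 p b = d^2) (h3 : phi2 a b = d^2)
    (h4 : phi2 a q = d^2) (h5 : phi2 b q = d^2) :
    q = p ∨ phi2 p q = 3 * d^2 := by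
  unfold phi2 at *
  set u0 := a 0 - p 0 with hu0
  set u1 := a 1 - p 1 with hu1
  set v0 := b 0 - p 0 with hv0
  set v1 := b 1 - p 1 with hv1
  set w0 := q 0 - p 0 with hw0
  set w1 := q 1 - p 1 with hw1
  have e1 : u0^2 + u1^2 = d^2 := by linear_combination h1
  have e2 : v0^2 + v1^2 = d^2 := by linear_combination h2
  have e3 : u0*v0 + u1*v1 = d^2/2 := by linear_combination (h1 + h2 - h3)/2
  have e4 : w0^2 + w1^2 = 2*(u0*w0 + u1*w1) := by linear_combination h4 - h1
  have e5 : u0*w0 + u1*w1 = v0*w0 + v1*w1 := by linear_combination (h5 - h4 + h1 - h2)/2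
  set s := u0*w0 + u1*w1 with hs
  set Δ := u0*v1 - u1*v0 with hΔ
  have eΔ : Δ^2 = 3*d^4/4 := by
    have lag : Δ^2 + (u0*v0+u1*v1)^2 = (u0^2+u1^2)*(v0^2+v1^2) := by ring
    rw [e1, e2, e3] at lag
    linear_combination lag
  have hΔne : Δ ≠ 0 := by
    intro h
    rw [h] at eΔ
    have : d^4 = 0 := by linear_combination -4/3 * eΔ
    exact hd (by simpa [pow_eq_zero_iff] using this)
  have c0 : Δ * w0 = (v1 - u1) * s := by
    have : Δ * w0 = v1*(u0*w0+u1*w1) - u1*(v0*w0+v1*w1) := by ring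
    rw [← e5] at this; linear_combination this
  have c1 : Δ * w1 = (u0 - v0) * s := by
    have : Δ * w1 = u0*(v0*w0+v1*w1) - v0*(u0*w0+u1*w1) := by ring
    rw [← e5] at this; linear_combination this
  have key : (w0^2+w1^2) * Δ^2 = ((v1-u1)^2 + (u0-v0)^2) * s^2 := by
    linear_combination (Δ*w0 + (v1-u1)*s) * c0 + (Δ*w1 + (u0-v0)*s) * c1
  have quv : (v1-u1)^2 + (u0-v0)^2 = d^2 := by linear_combination e1 + e2 - 2*e3
  rw [quv, e4, eΔ] at key
  have hd2 : (d:ℂ)^2 ≠ 0 := pow_ne_zero _ hd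
  have scase : s = 0 ∨ s = 3*d^2/2 := by
    rcases mul_eq_zero.1 (show s * (3*d^2/2 - s) * d^2 = 0 by linear_combination key) with h | h
    · rcases mul_eq_zero.1 h with h | h
      · exact Or.inl h
      · exact Or.inr (by linear_combination -h)
    · exact absurd h hd2
  rcases scase with h | h
  · left
    have hw0' : w0 = 0 := by
      have := c0; rw [h, mul_zero] at this
      exact (mul_eq_zero.1 this).resolve_left hΔne
    have hw1' : w1 = 0 := by
      have := c1; rw [h, mul_zero] at this
      exact (mul_eq_zero.1 this).resolve_left hΔne
    have h0 : q 0 = p 0 := by linear_combination hw0'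
    have h1' : q 1 = p 1 := by linear_combination hw1'
    funext i
    fin_cases i
    · exact h0
    · exact h1'
  · right
    linear_combination e4 + 2 * h

end Aux

theorem sqrt_three_mul_mem_D {d : ℝ} (hd : d ∈ D) : Real.sqrt 3 * d ∈ D := by
  obtain ⟨hd0, hg⟩ := hd
  have ht0 : (0:ℝ) < Real.sqrt 3 := Real.sqrt_pos.2 (by norm_num)
  refine ⟨by positivity, ?_⟩
  intro x y hxy
  obtain ⟨y', hxy', hyy'⟩ := aux_point_exists d hd0 x y hxy
  obtain ⟨a, b, h1, h2, h3, h4, h5⟩ := rhombus_exists d hd0 x y hxy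
  obtain ⟨a', b', h1', h2', h3', h4', h5'⟩ := rhombus_exists d hd0 x y' hxy'
  obtain ⟨S1, hS1f, hS1x, hS1y, hS1⟩ := hg x a h1
  obtain ⟨S2, hS2f, hS2x, hS2y, hS2⟩ := hg x b h2
  obtain ⟨S3, hS3f, hS3x, hS3y, hS3⟩ := hg a b h3
  obtain ⟨S4, hS4f, hS4x, hS4y, hS4⟩ := hg a y h4
  obtain ⟨S5, hS5f, hS5x, hS5y, hS5⟩ := hg b y h5
  obtain ⟨S6, hS6f, hS6x, hS6y, hS6⟩ := hg x a' h1'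
  obtain ⟨S7, hS7f, hS7x, hS7y, hS7⟩ := hg x b' h2'
  obtain ⟨S8, hS8f, hS8x, hS8y, hS8⟩ := hg a' b' h3'
  obtain ⟨S9, hS9f, hS9x, hS9y, hS9⟩ := hg a' y' h4'
  obtain ⟨S10, hS10f, hS10x, hS10y, hS10⟩ := hg b' y' h5'
  obtain ⟨S11, hS11f, hS11x, hS11y, hS11⟩ := hg y y' hyy'
  refine ⟨S1 ∪ S2 ∪ S3 ∪ S4 ∪ S5 ∪ S6 ∪ S7 ∪ S8 ∪ S9 ∪ S10 ∪ S11, ?_, ?_, ?_, ?_⟩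
  · exact hS1f.union hS2f |>.union hS3f |>.union hS4f |>.union hS5f |>.union hS6f |>.union hS7f |>.union hS8f |>.union hS9f |>.union hS10f |>.union hS11f
  · simp [hS1x]
  · simp [hS4y]
  intro f hf
  have mono : ∀ T : Set E2, T ⊆ S1 ∪ S2 ∪ S3 ∪ S4 ∪ S5 ∪ S6 ∪ S7 ∪ S8 ∪ S9 ∪ S10 ∪ S11 →
      ∀ u ∈ T, ∀ v ∈ T, dist u v = 1 → phi2 (f u) (f v) = 1 :=
    fun T hT u hu v hv h => hf u (hT hu) v (hT hv) h
  have g1 := hS1 f (mono S1 (by intro u hu; simp [hu]))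
  have g2 := hS2 f (mono S2 (by intro u hu; simp [hu]))
  have g3 := hS3 f (mono S3 (by intro u hu; simp [hu]))
  have g4 := hS4 f (mono S4 (by intro u hu; simp [hu]))
  have g5 := hS5 f (mono S5 (by intro u hu; simp [hu]))
  have g6 := hS6 f (mono S6 (by intro u hu; simp [hu]))
  have g7 := hS7 f (mono S7 (by intro u hu; simp [hu]))
  have g8 := hS8 f (mono S8 (by intro u hu; simp [hu]))
  have g9 := hS9 f (mono S9 (by intro u hu; simp [hu]))
  have g10 := hS10 f (mono S10 (by intro u hu; simp [hu]))
  have g11 := hS11 f (mono S11 (by intro u hu; simp [hu]))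
  have hdc : (d:ℂ) ≠ 0 := Complex.ofReal_ne_zero.2 hd0.ne'
  have hd2 : (d:ℂ)^2 ≠ 0 := pow_ne_zero _ hdc
  have r1 := rhombus_alg (d:ℂ) hdc (f x) (f a) (f b) (f y) g1 g2 g3 g4 g5
  have r2 := rhombus_alg (d:ℂ) hdc (f x) (f a') (f b') (f y') g6 g7 g8 g9 g10
  have hcast : ((Real.sqrt 3 * d : ℝ) : ℂ)^2 = 3 * (d:ℂ)^2 := by
    rw [Complex.ofReal_mul, mul_pow, ← Complex.ofReal_pow,
      Real.sq_sqrt (by norm_num : (0:ℝ) ≤ 3)]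
    norm_num
  rcases r1 with h | h
  · exfalso
    rw [h] at g11
    rcases r2 with h' | h'
    · rw [h'] at g11
      have : (0:ℂ) = (d:ℂ)^2 := by rw [← g11]; simp [phi2]
      exact hd2 this.symm
    · rw [h'] at g11
      have : (2:ℂ) * (d:ℂ)^2 = 0 := by linear_combination g11
      simp [hd2] at this
  · rw [h, hcast]
end

section
/- If d ∈ D then 2 · d ∈ D. -/
lemma phi2_comm (a b : Fin 2 → ℂ) : phi2 a b = phi2 b a := by
  simp only [phi2]; ring

lemma phi2_self (a : Fin 2 → ℂ) : phi2 a a = 0 := by simp [phi2]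

/-- Evaluation of the vanishing mixed Gram minor. -/
lemma det_eval (e A1 A2 A3 A4 A5 A6 A7 t : ℂ) (he : e ≠ 0)
    (H1 : A1 = e) (H2 : A2 = e/2) (H3 : A3 = -e/2) (H4 : A4 = e)
    (H5 : A5 = e/2) (H6 : A6 = -e/2) (H7 : A7 = e/2)
    (hdet : A1*(A4*A7 - A5*A6) - A2*(A2*A7 - A5*t) + A3*(A2*A6 - A4*t) = 0) :
    t = -e := by
  rw [H1, H2, H3, H4, H5, H6, H7] at hdet
  have h2 : e^2*(t + e) = 0 := by linear_combination (4/3)*hdet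
  have h3 := (mul_eq_zero.mp h2).resolve_left (pow_ne_zero 2 he)
  exact eq_neg_of_add_eq_zero_left h3

/-- Core algebraic rhombus lemma in coordinates over ℂ. -/
lemma rhombus_core (e a0 a1 b0 b1 z0 z1 : ℂ) (he : e ≠ 0)
    (h1 : a0^2 + a1^2 = e) (h3 : b0^2 + b1^2 = e) (h5 : z0^2 + z1^2 = e)
    (h2 : (a0 - z0)^2 + (a1 - z1)^2 = e) (h4 : (b0 - z0)^2 + (b1 - z1)^2 = e) :
    (a0 = b0 ∧ a1 = b1) ∨ (a0 - b0)^2 + (a1 - b1)^2 = 3*e := by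
  have hxz : a0*z0 + a1*z1 = e/2 := by linear_combination (h1 + h5 - h2)/2
  have hyz : b0*z0 + b1*z1 = e/2 := by linear_combination (h3 + h5 - h4)/2
  have hK : (a0*z1 - a1*z0)^2 = 3*e^2/4 := by
    linear_combination (z0^2 + z1^2)*h1 + e*h5 - (a0*z0 + a1*z1 + e/2)*hxz
  have hL : (b0*z1 - b1*z0)^2 = 3*e^2/4 := by
    linear_combination (z0^2 + z1^2)*h3 + e*h5 - (b0*z0 + b1*z1 + e/2)*hyz
  have hKL : (a0*z1 - a1*z0)*(b0*z1 - b1*z0) = (a0*b0 + a1*b1)*e - e^2/4 := by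
    linear_combination (a0*b0 + a1*b1)*h5 - (b0*z0 + b1*z1)*hxz - (e/2)*hyz
  have hfac : e^2*(((a0*b0 + a1*b1) - e)*(2*(a0*b0 + a1*b1) + e)) = 0 := by
    linear_combination (-2*((a0*z1 - a1*z0)*(b0*z1 - b1*z0)) - 2*((a0*b0 + a1*b1)*e - e^2/4))*hKL
      + 2*((b0*z1 - b1*z0)^2)*hK + (3*e^2/2)*hL
  have hfac2 := (mul_eq_zero.mp hfac).resolve_left (pow_ne_zero 2 he)
  rcases mul_eq_zero.mp hfac2 with hse | hse
  · have hs : a0*b0 + a1*b1 = e := by linear_combination hse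
    have hwx : (a0-b0)*a0 + (a1-b1)*a1 = 0 := by linear_combination h1 - hs
    have hwz : (a0-b0)*z0 + (a1-b1)*z1 = 0 := by linear_combination hxz - hyz
    have hK0 : a0*z1 - a1*z0 ≠ 0 := by
      intro h0
      apply he
      have h9 : e^2 = 0 := by linear_combination (-4/3)*hK + (4/3)*(a0*z1 - a1*z0)*h0
      exact pow_eq_zero_iff (two_ne_zero) |>.mp h9
    have hw0 : (a0*z1 - a1*z0)*(a0-b0) = 0 := by linear_combination z1*hwx - a1*hwz
    have hw1 : (a0*z1 - a1*z0)*(a1-b1) = 0 := by linear_combination a0*hwz - z0*hwx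
    exact Or.inl ⟨sub_eq_zero.mp ((mul_eq_zero.mp hw0).resolve_left hK0),
           sub_eq_zero.mp ((mul_eq_zero.mp hw1).resolve_left hK0)⟩
  · right
    linear_combination h1 + h3 - hse

/-- A `φ`-unit rhombus forces the long diagonal to have `φ`-value `3e`, unless its
endpoints coincide. -/
lemma rhombus_lemma (e : ℂ) (he : e ≠ 0) (X Y Z1 Z2 : Fin 2 → ℂ)
    (h1 : phi2 X Z1 = e) (h2 : phi2 X Z2 = e) (h3 : phi2 Y Z1 = e) (h4 : phi2 Y Z2 = e)
    (h5 : phi2 Z1 Z2 = e) : X = Y ∨ phi2 X Y = 3*e := by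
  simp only [phi2] at h1 h2 h3 h4 h5
  rcases rhombus_core e (X 0 - Z1 0) (X 1 - Z1 1) (Y 0 - Z1 0) (Y 1 - Z1 1)
      (Z2 0 - Z1 0) (Z2 1 - Z1 1) he (by linear_combination h1) (by linear_combination h3)
      (by linear_combination h5) (by linear_combination h2) (by linear_combination h4)
    with ⟨ha, hb⟩ | h
  · left
    funext i
    fin_cases i
    · show X 0 = Y 0
      linear_combination ha
    · show X 1 = Y 1
      linear_combination hb
  · right
    simp only [phi2]
    linear_combination h

/-- Forcing the `√3` distance: a rhombus plus an auxiliary braced point rules out the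
degenerate collapse. -/
lemma sqrt3_force (e : ℂ) (he : e ≠ 0) (X Y W Z1 Z2 Z1' Z2' : Fin 2 → ℂ)
    (h1 : phi2 X Z1 = e) (h2 : phi2 X Z2 = e) (h3 : phi2 Y Z1 = e) (h4 : phi2 Y Z2 = e)
    (h5 : phi2 Z1 Z2 = e) (hYW : phi2 Y W = e)
    (g1 : phi2 X Z1' = e) (g2 : phi2 X Z2' = e) (g3 : phi2 W Z1' = e) (g4 : phi2 W Z2' = e)
    (g5 : phi2 Z1' Z2' = e) : phi2 X Y = 3*e := by
  rcases rhombus_lemma e he X Y Z1 Z2 h1 h2 h3 h4 h5 with hXY | h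
  · exfalso
    rw [← hXY] at hYW
    rcases rhombus_lemma e he X W Z1' Z2' g1 g2 g3 g4 g5 with hXW | hW3
    · rw [hXW, phi2_self] at hYW
      exact he hYW.symm
    · rw [hYW] at hW3
      apply he
      linear_combination (-1/2)*hW3
  · exact h

/-- The central algebraic lemma: the configuration `A M C P Q` (images of
`x`, midpoint, `y`, and the two apexes) forces `φ(A,C) = 4e`. -/
lemma quintet (e : ℂ) (he : e ≠ 0) (A M C P Q : Fin 2 → ℂ)
    (hAM : phi2 A M = e) (hMC : phi2 M C = e) (hAP : phi2 A P = e) (hPM : phi2 P M = e)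
    (hMQ : phi2 M Q = e) (hQC : phi2 Q C = e) (hPQ : phi2 P Q = e)
    (hPC : phi2 P C = 3*e) (hAQ : phi2 A Q = 3*e) :
    phi2 A C = 4*e := by
  simp only [phi2] at hAM hMC hAP hPM hMQ hQC hPQ hPC hAQ ⊢
  have hap : (A 0 - M 0)*(P 0 - M 0) + (A 1 - M 1)*(P 1 - M 1) = e/2 := by
    linear_combination (hAM + hPM - hAP)/2
  have hpq : (P 0 - M 0)*(Q 0 - M 0) + (P 1 - M 1)*(Q 1 - M 1) = e/2 := by
    linear_combination (hPM + hMQ - hPQ)/2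
  have hcq : (C 0 - M 0)*(Q 0 - M 0) + (C 1 - M 1)*(Q 1 - M 1) = e/2 := by
    linear_combination (hMC + hMQ - hQC)/2
  have hpc : (P 0 - M 0)*(C 0 - M 0) + (P 1 - M 1)*(C 1 - M 1) = -e/2 := by
    linear_combination (hPM + hMC - hPC)/2
  have haq : (A 0 - M 0)*(Q 0 - M 0) + (A 1 - M 1)*(Q 1 - M 1) = -e/2 := by
    linear_combination (hAM + hMQ - hAQ)/2
  have hAM' : (A 0 - M 0)^2 + (A 1 - M 1)^2 = e := by linear_combination hAM
  have hPM' : (P 0 - M 0)^2 + (P 1 - M 1)^2 = e := by linear_combination hPM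
  have hMC' : (C 0 - M 0)^2 + (C 1 - M 1)^2 = e := by linear_combination hMC
  have hdet : ((A 0 - M 0)^2 + (A 1 - M 1)^2) *
        (((P 0 - M 0)^2 + (P 1 - M 1)^2) *
            ((C 0 - M 0)*(Q 0 - M 0) + (C 1 - M 1)*(Q 1 - M 1)) -
          ((P 0 - M 0)*(Q 0 - M 0) + (P 1 - M 1)*(Q 1 - M 1)) *
            ((P 0 - M 0)*(C 0 - M 0) + (P 1 - M 1)*(C 1 - M 1))) -
      ((A 0 - M 0)*(P 0 - M 0) + (A 1 - M 1)*(P 1 - M 1)) *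
        (((A 0 - M 0)*(P 0 - M 0) + (A 1 - M 1)*(P 1 - M 1)) *
            ((C 0 - M 0)*(Q 0 - M 0) + (C 1 - M 1)*(Q 1 - M 1)) -
          ((P 0 - M 0)*(Q 0 - M 0) + (P 1 - M 1)*(Q 1 - M 1)) *
            ((A 0 - M 0)*(C 0 - M 0) + (A 1 - M 1)*(C 1 - M 1))) +
      ((A 0 - M 0)*(Q 0 - M 0) + (A 1 - M 1)*(Q 1 - M 1)) *
        (((A 0 - M 0)*(P 0 - M 0) + (A 1 - M 1)*(P 1 - M 1)) *
            ((P 0 - M 0)*(C 0 - M 0) + (P 1 - M 1)*(C 1 - M 1)) -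
          ((P 0 - M 0)^2 + (P 1 - M 1)^2) *
            ((A 0 - M 0)*(C 0 - M 0) + (A 1 - M 1)*(C 1 - M 1))) = 0 := by
    ring
  have ht : (A 0 - M 0)*(C 0 - M 0) + (A 1 - M 1)*(C 1 - M 1) = -e :=
    det_eval e _ _ _ _ _ _ _ _ he hAM' hap haq hPM' hpq hpc hcq hdet
  linear_combination hAM + hMC - 2*ht

/-- Points of `ℝ²` from coordinates. -/
noncomputable def mkE (a b : ℝ) : EuclideanSpace ℝ (Fin 2) :=
  (WithLp.equiv 2 (Fin 2 → ℝ)).symm ![a, b]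

@[simp] lemma mkE_zero (a b : ℝ) : mkE a b 0 = a := rfl

@[simp] lemma mkE_one (a b : ℝ) : mkE a b 1 = b := rfl

lemma dist_sq_eq (a b : EuclideanSpace ℝ (Fin 2)) :
    dist a b ^ 2 = (a 0 - b 0)^2 + (a 1 - b 1)^2 := by
  rw [EuclideanSpace.dist_eq, Real.sq_sqrt (Finset.sum_nonneg fun i _ => sq_nonneg _)]
  simp [Fin.sum_univ_two, Real.dist_eq, sq_abs]

lemma dist_eq_of_sq {a b : EuclideanSpace ℝ (Fin 2)} {r : ℝ} (hr : 0 ≤ r)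
    (h : dist a b ^ 2 = r ^ 2) : dist a b = r := by
  have h0 : (0:ℝ) ≤ dist a b := dist_nonneg
  have h2 : (dist a b - r) * (dist a b + r) = 0 := by linear_combination h
  rcases mul_eq_zero.mp h2 with h3 | h3
  · exact sub_eq_zero.mp h3
  · linarith

/-- Auxiliary point for the `√3` brace. -/
lemma exists_W {d : ℝ} (hd : 0 < d) (P Y : EuclideanSpace ℝ (Fin 2))
    (h : dist P Y ^ 2 = 3*d^2) :
    ∃ W, dist Y W = d ∧ dist P W ^ 2 = 3*d^2 := by
  have h2 := dist_sq_eq P Y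
  rw [h] at h2
  have hw : (Y 0 - P 0)^2 + (Y 1 - P 1)^2 = 3*d^2 := by linear_combination -h2
  have hb : Real.sqrt (11/36) ^ 2 = 11/36 := Real.sq_sqrt (by norm_num)
  set b := Real.sqrt (11/36) with hbdef
  refine ⟨mkE (Y 0 - (Y 0 - P 0)/6 - b*(Y 1 - P 1)) (Y 1 - (Y 1 - P 1)/6 + b*(Y 0 - P 0)),
    ?_, ?_⟩
  · apply dist_eq_of_sq hd.le
    rw [dist_sq_eq]
    simp only [mkE_zero, mkE_one]
    linear_combination ((Y 0 - P 0)^2 + (Y 1 - P 1)^2)*hb + (1/3)*hw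
  · rw [dist_sq_eq]
    simp only [mkE_zero, mkE_one]
    linear_combination ((Y 0 - P 0)^2 + (Y 1 - P 1)^2)*hb + hw

/-- Rhombus points over a segment of length `√3 d`. -/
lemma exists_Z {d : ℝ} (hd : 0 < d) (U V : EuclideanSpace ℝ (Fin 2))
    (h : dist U V ^ 2 = 3*d^2) :
    ∃ Z1 Z2, dist U Z1 = d ∧ dist U Z2 = d ∧ dist V Z1 = d ∧ dist V Z2 = d ∧
      dist Z1 Z2 = d := by
  have h2 := dist_sq_eq U V
  rw [h] at h2
  have hw : (V 0 - U 0)^2 + (V 1 - U 1)^2 = 3*d^2 := by linear_combination -h2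
  have ht : Real.sqrt (1/12) ^ 2 = 1/12 := Real.sq_sqrt (by norm_num)
  set t := Real.sqrt (1/12) with htdef
  refine ⟨mkE (U 0 + (V 0 - U 0)/2 - t*(V 1 - U 1)) (U 1 + (V 1 - U 1)/2 + t*(V 0 - U 0)),
    mkE (U 0 + (V 0 - U 0)/2 + t*(V 1 - U 1)) (U 1 + (V 1 - U 1)/2 - t*(V 0 - U 0)),
    ?_, ?_, ?_, ?_, ?_⟩ <;>
  · apply dist_eq_of_sq hd.le
    rw [dist_sq_eq]
    simp only [mkE_zero, mkE_one]
    first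
    | linear_combination ((V 0 - U 0)^2 + (V 1 - U 1)^2)*ht + (1/3)*hw
    | linear_combination 4*((V 0 - U 0)^2 + (V 1 - U 1)^2)*ht + (1/3)*hw

theorem two_mul_mem_D {d : ℝ} (hd : d ∈ D) : 2 * d ∈ D := by
  obtain ⟨hd0, hprop⟩ := hd
  refine ⟨by linarith, ?_⟩
  intro x y hxy
  have hxy2 := dist_sq_eq x y
  rw [hxy] at hxy2
  have hw : (y 0 - x 0)^2 + (y 1 - x 1)^2 = 4*d^2 := by linear_combination -hxy2
  have hh : Real.sqrt (3/16) ^ 2 = 3/16 := Real.sq_sqrt (by norm_num)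
  set h3r := Real.sqrt (3/16) with h3rdef
  set m := mkE (x 0 + (y 0 - x 0)/2) (x 1 + (y 1 - x 1)/2) with hm
  set p := mkE (x 0 + (y 0 - x 0)/4 - h3r*(y 1 - x 1)) (x 1 + (y 1 - x 1)/4 + h3r*(y 0 - x 0)) with hp
  set q := mkE (x 0 + 3*(y 0 - x 0)/4 - h3r*(y 1 - x 1)) (x 1 + 3*(y 1 - x 1)/4 + h3r*(y 0 - x 0)) with hq
  have dxm : dist x m = d := by
    apply dist_eq_of_sq hd0.le
    rw [dist_sq_eq, hm]
    simp only [mkE_zero, mkE_one]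
    linear_combination (1/4)*hw
  have dmy : dist m y = d := by
    apply dist_eq_of_sq hd0.le
    rw [dist_sq_eq, hm]
    simp only [mkE_zero, mkE_one]
    linear_combination (1/4)*hw
  have dxp : dist x p = d := by
    apply dist_eq_of_sq hd0.le
    rw [dist_sq_eq, hp]
    simp only [mkE_zero, mkE_one]
    linear_combination ((y 0 - x 0)^2 + (y 1 - x 1)^2)*hh + (1/4)*hw
  have dpm : dist p m = d := by
    apply dist_eq_of_sq hd0.le
    rw [dist_sq_eq, hp, hm]
    simp only [mkE_zero, mkE_one]
    linear_combination ((y 0 - x 0)^2 + (y 1 - x 1)^2)*hh + (1/4)*hw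
  have dmq : dist m q = d := by
    apply dist_eq_of_sq hd0.le
    rw [dist_sq_eq, hm, hq]
    simp only [mkE_zero, mkE_one]
    linear_combination ((y 0 - x 0)^2 + (y 1 - x 1)^2)*hh + (1/4)*hw
  have dqy : dist q y = d := by
    apply dist_eq_of_sq hd0.le
    rw [dist_sq_eq, hq]
    simp only [mkE_zero, mkE_one]
    linear_combination ((y 0 - x 0)^2 + (y 1 - x 1)^2)*hh + (1/4)*hw
  have dpq : dist p q = d := by
    apply dist_eq_of_sq hd0.le
    rw [dist_sq_eq, hp, hq]
    simp only [mkE_zero, mkE_one]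
    linear_combination (1/4)*hw
  have dpy3 : dist p y ^ 2 = 3*d^2 := by
    rw [dist_sq_eq, hp]
    simp only [mkE_zero, mkE_one]
    linear_combination ((y 0 - x 0)^2 + (y 1 - x 1)^2)*hh + (3/4)*hw
  have dxq3 : dist x q ^ 2 = 3*d^2 := by
    rw [dist_sq_eq, hq]
    simp only [mkE_zero, mkE_one]
    linear_combination ((y 0 - x 0)^2 + (y 1 - x 1)^2)*hh + (3/4)*hw
  obtain ⟨WA, hWAy, hWAp⟩ := exists_W hd0 p y dpy3
  obtain ⟨ZA1, ZA2, ha1, ha2, ha3, ha4, ha5⟩ := exists_Z hd0 p WA hWAp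
  obtain ⟨WB, hWBq, hWBx⟩ := exists_W hd0 x q dxq3
  obtain ⟨ZB1, ZB2, hb1, hb2, hb3, hb4, hb5⟩ := exists_Z hd0 x WB hWBx
  obtain ⟨S1, fS1, mu1, mv1, P1⟩ := hprop x m dxm
  obtain ⟨S2, fS2, mu2, mv2, P2⟩ := hprop m y dmy
  obtain ⟨S3, fS3, mu3, mv3, P3⟩ := hprop x p dxp
  obtain ⟨S4, fS4, mu4, mv4, P4⟩ := hprop p m dpm
  obtain ⟨S5, fS5, mu5, mv5, P5⟩ := hprop m q dmq
  obtain ⟨S6, fS6, mu6, mv6, P6⟩ := hprop q y dqy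
  obtain ⟨S7, fS7, mu7, mv7, P7⟩ := hprop p q dpq
  obtain ⟨S8, fS8, mu8, mv8, P8⟩ := hprop y WA hWAy
  obtain ⟨S9, fS9, mu9, mv9, P9⟩ := hprop p ZA1 ha1
  obtain ⟨S10, fS10, mu10, mv10, P10⟩ := hprop p ZA2 ha2
  obtain ⟨S11, fS11, mu11, mv11, P11⟩ := hprop WA ZA1 ha3
  obtain ⟨S12, fS12, mu12, mv12, P12⟩ := hprop WA ZA2 ha4
  obtain ⟨S13, fS13, mu13, mv13, P13⟩ := hprop ZA1 ZA2 ha5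
  obtain ⟨S14, fS14, mu14, mv14, P14⟩ := hprop q WB hWBq
  obtain ⟨S15, fS15, mu15, mv15, P15⟩ := hprop x ZB1 hb1
  obtain ⟨S16, fS16, mu16, mv16, P16⟩ := hprop x ZB2 hb2
  obtain ⟨S17, fS17, mu17, mv17, P17⟩ := hprop WB ZB1 hb3
  obtain ⟨S18, fS18, mu18, mv18, P18⟩ := hprop WB ZB2 hb4
  obtain ⟨S19, fS19, mu19, mv19, P19⟩ := hprop ZB1 ZB2 hb5
  refine ⟨S1 ∪ (S2 ∪ (S3 ∪ (S4 ∪ (S5 ∪ (S6 ∪ (S7 ∪ (S8 ∪ (S9 ∪ (S10 ∪ (S11 ∪ (S12 ∪ (S13 ∪ (S14 ∪ (S15 ∪ (S16 ∪ (S17 ∪ (S18 ∪ (S19)))))))))))))))))), ?_, ?_, ?_, ?_⟩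
  · exact fS1.union (fS2.union (fS3.union (fS4.union (fS5.union (fS6.union (fS7.union (fS8.union (fS9.union (fS10.union (fS11.union (fS12.union (fS13.union (fS14.union (fS15.union (fS16.union (fS17.union (fS18.union (fS19))))))))))))))))))
  · exact Set.mem_union_left _ mu1
  · exact Set.mem_union_right _ (Set.mem_union_left _ mv2)
  intro f hf
  have F1 : phi2 (f x) (f m) = ((d:ℝ):ℂ)^2 :=
    P1 f (fun u hu v hv huv => hf u (Set.mem_union_left _ hu) v (Set.mem_union_left _ hv) huv)
  have F2 : phi2 (f m) (f y) = ((d:ℝ):ℂ)^2 :=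
    P2 f (fun u hu v hv huv => hf u (Set.mem_union_right _ (Set.mem_union_left _ hu)) v (Set.mem_union_right _ (Set.mem_union_left _ hv)) huv)
  have F3 : phi2 (f x) (f p) = ((d:ℝ):ℂ)^2 :=
    P3 f (fun u hu v hv huv => hf u (Set.mem_union_right _ (Set.mem_union_right _ (Set.mem_union_left _ hu))) v (Set.mem_union_right _ (Set.mem_union_right _ (Set.mem_union_left _ hv))) huv)
  have F4 : phi2 (f p) (f m) = ((d:ℝ):ℂ)^2 :=
    P4 f (fun u hu v hv huv => hf u (Set.mem_union_right _ (Set.mem_union_right _ (Set.mem_union_right _ (Set.mem_union_left _ hu)))) v (Set.mem_union_right _ (Set.mem_union_right _ (Set.mem_union_right _ (Set.mem_union_left _ hv)))) huv)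
  have F5 : phi2 (f m) (f q) = ((d:ℝ):ℂ)^2 :=
    P5 f (fun u hu v hv huv => hf u (Set.mem_union_right _ (Set.mem_union_right _ (Set.mem_union_right _ (Set.mem_union_right _ (Set.mem_union_left _ hu))))) v (Set.mem_union_right _ (Set.mem_union_right _ (Set.mem_union_right _ (Set.mem_union_right _ (Set.mem_union_left _ hv))))) huv)
  have F6 : phi2 (f q) (f y) = ((d:ℝ):ℂ)^2 :=
    P6 f (fun u hu v hv huv => hf u (Set.mem_union_right _ (Set.mem_union_right _ (Set.mem_union_right _ (Set.mem_union_right _ (Set.mem_union_right _ (Set.mem_union_left _ hu)))))) v (Set.mem_union_right _ (Set.mem_union_right _ (Set.mem_union_right _ (Set.mem_union_right _ (Set.mem_union_right _ (Set.mem_union_left _ hv)))))) huv)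
  have F7 : phi2 (f p) (f q) = ((d:ℝ):ℂ)^2 :=
    P7 f (fun u hu v hv huv => hf u (Set.mem_union_right _ (Set.mem_union_right _ (Set.mem_union_right _ (Set.mem_union_right _ (Set.mem_union_right _ (Set.mem_union_right _ (Set.mem_union_left _ hu))))))) v (Set.mem_union_right _ (Set.mem_union_right _ (Set.mem_union_right _ (Set.mem_union_right _ (Set.mem_union_right _ (Set.mem_union_right _ (Set.mem_union_left _ hv))))))) huv)
  have F8 : phi2 (f y) (f WA) = ((d:ℝ):ℂ)^2 :=
    P8 f (fun u hu v hv huv => hf u (Set.mem_union_right _ (Set.mem_union_right _ (Set.mem_union_right _ (Set.mem_union_right _ (Set.mem_union_right _ (Set.mem_union_right _ (Set.mem_union_right _ (Set.mem_union_left _ hu)))))))) v (Set.mem_union_right _ (Set.mem_union_right _ (Set.mem_union_right _ (Set.mem_union_right _ (Set.mem_union_right _ (Set.mem_union_right _ (Set.mem_union_right _ (Set.mem_union_left _ hv)))))))) huv)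
  have F9 : phi2 (f p) (f ZA1) = ((d:ℝ):ℂ)^2 :=
    P9 f (fun u hu v hv huv => hf u (Set.mem_union_right _ (Set.mem_union_right _ (Set.mem_union_right _ (Set.mem_union_right _ (Set.mem_union_right _ (Set.mem_union_right _ (Set.mem_union_right _ (Set.mem_union_right _ (Set.mem_union_left _ hu))))))))) v (Set.mem_union_right _ (Set.mem_union_right _ (Set.mem_union_right _ (Set.mem_union_right _ (Set.mem_union_right _ (Set.mem_union_right _ (Set.mem_union_right _ (Set.mem_union_right _ (Set.mem_union_left _ hv))))))))) huv)
  have F10 : phi2 (f p) (f ZA2) = ((d:ℝ):ℂ)^2 :=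
    P10 f (fun u hu v hv huv => hf u (Set.mem_union_right _ (Set.mem_union_right _ (Set.mem_union_right _ (Set.mem_union_right _ (Set.mem_union_right _ (Set.mem_union_right _ (Set.mem_union_right _ (Set.mem_union_right _ (Set.mem_union_right _ (Set.mem_union_left _ hu)))))))))) v (Set.mem_union_right _ (Set.mem_union_right _ (Set.mem_union_right _ (Set.mem_union_right _ (Set.mem_union_right _ (Set.mem_union_right _ (Set.mem_union_right _ (Set.mem_union_right _ (Set.mem_union_right _ (Set.mem_union_left _ hv)))))))))) huv)
  have F11 : phi2 (f WA) (f ZA1) = ((d:ℝ):ℂ)^2 :=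
    P11 f (fun u hu v hv huv => hf u (Set.mem_union_right _ (Set.mem_union_right _ (Set.mem_union_right _ (Set.mem_union_right _ (Set.mem_union_right _ (Set.mem_union_right _ (Set.mem_union_right _ (Set.mem_union_right _ (Set.mem_union_right _ (Set.mem_union_right _ (Set.mem_union_left _ hu))))))))))) v (Set.mem_union_right _ (Set.mem_union_right _ (Set.mem_union_right _ (Set.mem_union_right _ (Set.mem_union_right _ (Set.mem_union_right _ (Set.mem_union_right _ (Set.mem_union_right _ (Set.mem_union_right _ (Set.mem_union_right _ (Set.mem_union_left _ hv))))))))))) huv)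
  have F12 : phi2 (f WA) (f ZA2) = ((d:ℝ):ℂ)^2 :=
    P12 f (fun u hu v hv huv => hf u (Set.mem_union_right _ (Set.mem_union_right _ (Set.mem_union_right _ (Set.mem_union_right _ (Set.mem_union_right _ (Set.mem_union_right _ (Set.mem_union_right _ (Set.mem_union_right _ (Set.mem_union_right _ (Set.mem_union_right _ (Set.mem_union_right _ (Set.mem_union_left _ hu)))))))))))) v (Set.mem_union_right _ (Set.mem_union_right _ (Set.mem_union_right _ (Set.mem_union_right _ (Set.mem_union_right _ (Set.mem_union_right _ (Set.mem_union_right _ (Set.mem_union_right _ (Set.mem_union_right _ (Set.mem_union_right _ (Set.mem_union_right _ (Set.mem_union_left _ hv)))))))))))) huv)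
  have F13 : phi2 (f ZA1) (f ZA2) = ((d:ℝ):ℂ)^2 :=
    P13 f (fun u hu v hv huv => hf u (Set.mem_union_right _ (Set.mem_union_right _ (Set.mem_union_right _ (Set.mem_union_right _ (Set.mem_union_right _ (Set.mem_union_right _ (Set.mem_union_right _ (Set.mem_union_right _ (Set.mem_union_right _ (Set.mem_union_right _ (Set.mem_union_right _ (Set.mem_union_right _ (Set.mem_union_left _ hu))))))))))))) v (Set.mem_union_right _ (Set.mem_union_right _ (Set.mem_union_right _ (Set.mem_union_right _ (Set.mem_union_right _ (Set.mem_union_right _ (Set.mem_union_right _ (Set.mem_union_right _ (Set.mem_union_right _ (Set.mem_union_right _ (Set.mem_union_right _ (Set.mem_union_right _ (Set.mem_union_left _ hv))))))))))))) huv)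
  have F14 : phi2 (f q) (f WB) = ((d:ℝ):ℂ)^2 :=
    P14 f (fun u hu v hv huv => hf u (Set.mem_union_right _ (Set.mem_union_right _ (Set.mem_union_right _ (Set.mem_union_right _ (Set.mem_union_right _ (Set.mem_union_right _ (Set.mem_union_right _ (Set.mem_union_right _ (Set.mem_union_right _ (Set.mem_union_right _ (Set.mem_union_right _ (Set.mem_union_right _ (Set.mem_union_right _ (Set.mem_union_left _ hu)))))))))))))) v (Set.mem_union_right _ (Set.mem_union_right _ (Set.mem_union_right _ (Set.mem_union_right _ (Set.mem_union_right _ (Set.mem_union_right _ (Set.mem_union_right _ (Set.mem_union_right _ (Set.mem_union_right _ (Set.mem_union_right _ (Set.mem_union_right _ (Set.mem_union_right _ (Set.mem_union_right _ (Set.mem_union_left _ hv)))))))))))))) huv)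
  have F15 : phi2 (f x) (f ZB1) = ((d:ℝ):ℂ)^2 :=
    P15 f (fun u hu v hv huv => hf u (Set.mem_union_right _ (Set.mem_union_right _ (Set.mem_union_right _ (Set.mem_union_right _ (Set.mem_union_right _ (Set.mem_union_right _ (Set.mem_union_right _ (Set.mem_union_right _ (Set.mem_union_right _ (Set.mem_union_right _ (Set.mem_union_right _ (Set.mem_union_right _ (Set.mem_union_right _ (Set.mem_union_right _ (Set.mem_union_left _ hu))))))))))))))) v (Set.mem_union_right _ (Set.mem_union_right _ (Set.mem_union_right _ (Set.mem_union_right _ (Set.mem_union_right _ (Set.mem_union_right _ (Set.mem_union_right _ (Set.mem_union_right _ (Set.mem_union_right _ (Set.mem_union_right _ (Set.mem_union_right _ (Set.mem_union_right _ (Set.mem_union_right _ (Set.mem_union_right _ (Set.mem_union_left _ hv))))))))))))))) huv)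
  have F16 : phi2 (f x) (f ZB2) = ((d:ℝ):ℂ)^2 :=
    P16 f (fun u hu v hv huv => hf u (Set.mem_union_right _ (Set.mem_union_right _ (Set.mem_union_right _ (Set.mem_union_right _ (Set.mem_union_right _ (Set.mem_union_right _ (Set.mem_union_right _ (Set.mem_union_right _ (Set.mem_union_right _ (Set.mem_union_right _ (Set.mem_union_right _ (Set.mem_union_right _ (Set.mem_union_right _ (Set.mem_union_right _ (Set.mem_union_right _ (Set.mem_union_left _ hu)))))))))))))))) v (Set.mem_union_right _ (Set.mem_union_right _ (Set.mem_union_right _ (Set.mem_union_right _ (Set.mem_union_right _ (Set.mem_union_right _ (Set.mem_union_right _ (Set.mem_union_right _ (Set.mem_union_right _ (Set.mem_union_right _ (Set.mem_union_right _ (Set.mem_union_right _ (Set.mem_union_right _ (Set.mem_union_right _ (Set.mem_union_right _ (Set.mem_union_left _ hv)))))))))))))))) huv)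
  have F17 : phi2 (f WB) (f ZB1) = ((d:ℝ):ℂ)^2 :=
    P17 f (fun u hu v hv huv => hf u (Set.mem_union_right _ (Set.mem_union_right _ (Set.mem_union_right _ (Set.mem_union_right _ (Set.mem_union_right _ (Set.mem_union_right _ (Set.mem_union_right _ (Set.mem_union_right _ (Set.mem_union_right _ (Set.mem_union_right _ (Set.mem_union_right _ (Set.mem_union_right _ (Set.mem_union_right _ (Set.mem_union_right _ (Set.mem_union_right _ (Set.mem_union_right _ (Set.mem_union_left _ hu))))))))))))))))) v (Set.mem_union_right _ (Set.mem_union_right _ (Set.mem_union_right _ (Set.mem_union_right _ (Set.mem_union_right _ (Set.mem_union_right _ (Set.mem_union_right _ (Set.mem_union_right _ (Set.mem_union_right _ (Set.mem_union_right _ (Set.mem_union_right _ (Set.mem_union_right _ (Set.mem_union_right _ (Set.mem_union_right _ (Set.mem_union_right _ (Set.mem_union_right _ (Set.mem_union_left _ hv))))))))))))))))) huv)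
  have F18 : phi2 (f WB) (f ZB2) = ((d:ℝ):ℂ)^2 :=
    P18 f (fun u hu v hv huv => hf u (Set.mem_union_right _ (Set.mem_union_right _ (Set.mem_union_right _ (Set.mem_union_right _ (Set.mem_union_right _ (Set.mem_union_right _ (Set.mem_union_right _ (Set.mem_union_right _ (Set.mem_union_right _ (Set.mem_union_right _ (Set.mem_union_right _ (Set.mem_union_right _ (Set.mem_union_right _ (Set.mem_union_right _ (Set.mem_union_right _ (Set.mem_union_right _ (Set.mem_union_right _ (Set.mem_union_left _ hu)))))))))))))))))) v (Set.mem_union_right _ (Set.mem_union_right _ (Set.mem_union_right _ (Set.mem_union_right _ (Set.mem_union_right _ (Set.mem_union_right _ (Set.mem_union_right _ (Set.mem_union_right _ (Set.mem_union_right _ (Set.mem_union_right _ (Set.mem_union_right _ (Set.mem_union_right _ (Set.mem_union_right _ (Set.mem_union_right _ (Set.mem_union_right _ (Set.mem_union_right _ (Set.mem_union_right _ (Set.mem_union_left _ hv)))))))))))))))))) huv)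
  have F19 : phi2 (f ZB1) (f ZB2) = ((d:ℝ):ℂ)^2 :=
    P19 f (fun u hu v hv huv => hf u (Set.mem_union_right _ (Set.mem_union_right _ (Set.mem_union_right _ (Set.mem_union_right _ (Set.mem_union_right _ (Set.mem_union_right _ (Set.mem_union_right _ (Set.mem_union_right _ (Set.mem_union_right _ (Set.mem_union_right _ (Set.mem_union_right _ (Set.mem_union_right _ (Set.mem_union_right _ (Set.mem_union_right _ (Set.mem_union_right _ (Set.mem_union_right _ (Set.mem_union_right _ (Set.mem_union_right _ (hu))))))))))))))))))) v (Set.mem_union_right _ (Set.mem_union_right _ (Set.mem_union_right _ (Set.mem_union_right _ (Set.mem_union_right _ (Set.mem_union_right _ (Set.mem_union_right _ (Set.mem_union_right _ (Set.mem_union_right _ (Set.mem_union_right _ (Set.mem_union_right _ (Set.mem_union_right _ (Set.mem_union_right _ (Set.mem_union_right _ (Set.mem_union_right _ (Set.mem_union_right _ (Set.mem_union_right _ (Set.mem_union_right _ (hv))))))))))))))))))) huv)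
  have he2 : ((d:ℝ):ℂ)^2 ≠ 0 := pow_ne_zero 2 (Complex.ofReal_ne_zero.mpr hd0.ne')
  have hpy : phi2 (f p) (f y) = 3*((d:ℝ):ℂ)^2 :=
    sqrt3_force _ he2 (f p) (f y) (f WA) (f q) (f m) (f ZA1) (f ZA2)
      F7 F4 ((phi2_comm _ _).trans F6) ((phi2_comm _ _).trans F2)
      ((phi2_comm _ _).trans F5) F8 F9 F10 F11 F12 F13
  have hxq : phi2 (f x) (f q) = 3*((d:ℝ):ℂ)^2 :=
    sqrt3_force _ he2 (f x) (f q) (f WB) (f p) (f m) (f ZB1) (f ZB2)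
      F3 F1 ((phi2_comm _ _).trans F7) ((phi2_comm _ _).trans F5)
      F4 F14 F15 F16 F17 F18 F19
  have hfin : phi2 (f x) (f y) = 4*((d:ℝ):ℂ)^2 :=
    quintet _ he2 (f x) (f m) (f y) (f p) (f q) F1 F2 F3 F4 F5 F6 F7 hpy hxq
  rw [hfin]
  push_cast
  ring
end

section
/- Every continuous map f : ℝ² → ℂ² that preserves unit distance preserves all distances; that is, if f is continuous and φ(f(x), f(y)) = 1 whenever x, y ∈ ℝ² satisfy |x−y| = 1, then for every d ≥ 0 and all x, y ∈ ℝ² with |x−y| = d one has φ(f(x), f(y)) = d². -/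
/-!
For four points of `ℂ²` the three difference vectors are linearly dependent, so their Gram
determinant vanishes; written in the six values of `φ` this is a Cayley–Menger relation.
Applied to the image of a planar configuration whose other five distances are already known to
be preserved, it constrains `φ` on the sixth pair.

A rhombus made of two unit equilateral triangles shows that `φ(f x, f y) ∈ {0, 3}` when
`|x - y| = √3`; the pairs at that distance form a connected set, so by continuity `φ` is
constant there, and the value `0` is ruled out by a unit square. Two more configurations give
distance `2`. Then `φ ∘ f` satisfies Apollonius' relation `φ(p,z) + φ(p,z') = 2 φ(p,q) + 2`
whenever `q` is the midpoint of a segment `zz'` of length `2`; with it, preserved squared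
distances propagate from `1, 2, 3` to all integers and then to all dyadic rationals, and
continuity does the rest.
-/

open Filter Topology

namespace UnitDistance

theorem phi2_self (p : Fin 2 → ℂ) : phi2 p p = 0 := by simp [phi2]

@[fun_prop]
theorem _root_.Continuous.phi2 {α : Type*} [TopologicalSpace α] {g h : α → Fin 2 → ℂ}
    (hg : Continuous g) (hh : Continuous h) : Continuous fun a => phi2 (g a) (h a) := by
  unfold _root_.phi2; fun_prop

/-- For `vᵢ = pᵢ - p₀`, the determinant of `(2 vᵢ · vⱼ)`, written through polarization
`2 vᵢ · vⱼ = φ(p₀,pᵢ) + φ(p₀,pⱼ) - φ(pᵢ,pⱼ)` in `a = φ(p₀,p₁)`, `b = φ(p₀,p₂)`, `c = φ(p₀,p₃)`,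
`d = φ(p₁,p₂)`, `e = φ(p₁,p₃)`, `g = φ(p₂,p₃)`. -/
def cayleyMenger (a b c d e g : ℂ) : ℂ :=
  2 * a * (4 * b * c - (b + c - g) ^ 2)
    - (a + b - d) * (2 * c * (a + b - d) - (b + c - g) * (a + c - e))
    + (a + c - e) * ((a + b - d) * (b + c - g) - 2 * b * (a + c - e))

theorem cayleyMenger_eq_zero {X : Type*} (f : X → Fin 2 → ℂ) (x₀ x₁ x₂ x₃ : X) {a b c d e g : ℂ}
    (h₀₁ : phi2 (f x₀) (f x₁) = a) (h₀₂ : phi2 (f x₀) (f x₂) = b)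
    (h₀₃ : phi2 (f x₀) (f x₃) = c) (h₁₂ : phi2 (f x₁) (f x₂) = d)
    (h₁₃ : phi2 (f x₁) (f x₃) = e) (h₂₃ : phi2 (f x₂) (f x₃) = g) :
    cayleyMenger a b c d e g = 0 := by
  subst_vars
  unfold cayleyMenger phi2
  ring

section Preserves

variable {X : Type*} [PseudoMetricSpace X]

def Phi2EqOn (f : X → Fin 2 → ℂ) (s : ℝ) (v : ℂ) : Prop :=
  ∀ x y, dist x y ^ 2 = s → phi2 (f x) (f y) = v

abbrev PreservesDistSq (f : X → Fin 2 → ℂ) (s : ℝ) : Prop := Phi2EqOn f s s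

theorem Phi2EqOn.comp_isometry {Y : Type*} [PseudoMetricSpace Y] {f : X → Fin 2 → ℂ} {s : ℝ}
    {v : ℂ} (h : Phi2EqOn f s v) {g : Y → X} (hg : Isometry g) : Phi2EqOn (f ∘ g) s v :=
  fun x y hxy => h (g x) (g y) (by rwa [hg.dist_eq])

end Preserves

theorem dist_sq_eq_re_im (z w : ℂ) : dist z w ^ 2 = (z.re - w.re) ^ 2 + (z.im - w.im) ^ 2 := by
  rw [Complex.dist_eq_re_im, Real.sq_sqrt (by positivity)]

theorem exists_isometry_zero_dist (x y : ℂ) :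
    ∃ g : ℂ → ℂ, Isometry g ∧ g 0 = x ∧ g (dist x y) = y := by
  set u := Complex.exp ((y - x).arg * Complex.I)
  refine ⟨fun w => x + u * w, Isometry.of_dist_eq fun a b => ?_, by simp, ?_⟩
  · rw [dist_eq_norm, dist_eq_norm, add_sub_add_left_eq_sub, ← mul_sub, norm_mul,
      Complex.norm_exp_ofReal_mul_I, one_mul]
  · simp only
    rw [dist_comm, dist_eq_norm, mul_comm, Complex.norm_mul_exp_arg_mul_I, add_sub_cancel]

theorem forall_dist_sq_eq_of_isometry {P : ℂ → ℂ → Prop} {s : ℝ}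
    (h : ∀ g : ℂ → ℂ, Isometry g → P (g 0) (g √s)) (x y : ℂ) (hxy : dist x y ^ 2 = s) :
    P x y := by
  obtain ⟨g, hg, hgx, hgy⟩ := exists_isometry_zero_dist x y
  rw [← hxy, Real.sqrt_sq dist_nonneg] at h
  simpa only [hgx, hgy] using h g hg

variable {f : ℂ → Fin 2 → ℂ}

theorem phi2_mul_phi2_sub_three (h1 : PreservesDistSq f 1) (x y : ℂ) (hxy : dist x y ^ 2 = 3) :
    phi2 (f x) (f y) * (phi2 (f x) (f y) - 3) = 0 := by
  revert x y
  refine forall_dist_sq_eq_of_isometry fun g hg => ?_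
  have h := cayleyMenger_eq_zero f (g 0) (g ⟨√3 / 2, 1 / 2⟩) (g ⟨√3 / 2, -1 / 2⟩) (g √3)
    (h1 _ _ ?_) (h1 _ _ ?_) rfl (h1 _ _ ?_) (h1 _ _ ?_) (h1 _ _ ?_)
  · unfold cayleyMenger at h
    push_cast at h
    linear_combination (-1 / 2) * h
  all_goals rw [hg.dist_eq, dist_sq_eq_re_im]; norm_num <;> ring_nf <;> norm_num

theorem phi2EqOn_four_one (h1 : PreservesDistSq f 1) (h0 : Phi2EqOn f 3 0) : Phi2EqOn f 4 1 := by
  refine forall_dist_sq_eq_of_isometry fun g hg => ?_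
  have h := cayleyMenger_eq_zero f (g 0) (g 1) (g ⟨1 / 2, √3 / 2⟩) (g √4)
    (h1 _ _ ?_) (h1 _ _ ?_) rfl (h1 _ _ ?_) (h1 _ _ ?_) (h0 _ _ ?_)
  · unfold cayleyMenger at h
    push_cast at h
    have : (phi2 (f (g 0)) (f (g √4)) - 1) ^ 2 = 0 := by linear_combination (-1 / 2) * h
    linear_combination pow_eq_zero_iff two_ne_zero |>.1 this
  all_goals rw [hg.dist_eq, dist_sq_eq_re_im]; norm_num [div_pow]

theorem phi2_sq_sub_phi2_add_one (h1 : PreservesDistSq f 1) (h0 : Phi2EqOn f 3 0)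
    (x y : ℂ) (hxy : dist x y ^ 2 = 2) :
    phi2 (f x) (f y) ^ 2 - phi2 (f x) (f y) + 1 = 0 := by
  have h41 := phi2EqOn_four_one h1 h0
  revert x y
  refine forall_dist_sq_eq_of_isometry fun g hg => ?_
  have h := cayleyMenger_eq_zero f (g 0) (g ⟨√2, 1⟩) (g ⟨√2, -1⟩) (g √2)
    (h0 _ _ ?_) (h0 _ _ ?_) rfl (h41 _ _ ?_) (h1 _ _ ?_) (h1 _ _ ?_)
  · unfold cayleyMenger at h
    push_cast at h
    linear_combination (-1 / 2) * h
  all_goals rw [hg.dist_eq, dist_sq_eq_re_im]; norm_num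

/-- On the unit square both diagonals satisfy `c² - c + 1 = 0`, which is incompatible with the
Cayley–Menger relation `c₁ c₂ (c₁ + c₂ - 4) = 0` between them. -/
theorem not_phi2EqOn_three_zero (h1 : PreservesDistSq f 1) : ¬ Phi2EqOn f 3 0 := by
  intro h0
  have h := cayleyMenger_eq_zero f 0 ⟨√2 / 2, √2 / 2⟩ ⟨√2 / 2, -(√2 / 2)⟩ √2
    (h1 _ _ ?_) (h1 _ _ ?_) rfl rfl (h1 _ _ ?_) (h1 _ _ ?_)
  · have hc₁ := phi2_sq_sub_phi2_add_one h1 h0 0 √2 (by rw [dist_sq_eq_re_im]; norm_num)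
    have hc₂ := phi2_sq_sub_phi2_add_one h1 h0 ⟨√2 / 2, √2 / 2⟩ ⟨√2 / 2, -(√2 / 2)⟩
      (by rw [dist_sq_eq_re_im]; norm_num [div_pow])
    set c₁ := phi2 (f 0) (f √2)
    set c₂ := phi2 (f ⟨√2 / 2, √2 / 2⟩) (f ⟨√2 / 2, -(√2 / 2)⟩)
    unfold cayleyMenger at h
    push_cast at h
    have hcm : c₁ * c₂ * (c₁ + c₂ - 4) = 0 := by linear_combination (-1 / 2) * h
    rcases mul_eq_zero.1 hcm with hprod | hsum
    · rcases mul_eq_zero.1 hprod with h₁ | h₂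
      · simp [h₁] at hc₁
      · simp [h₂] at hc₂
    · have h₁ : c₁ = 2 := by linear_combination (hc₁ - hc₂ + (c₂ + 3 - c₁) * hsum) / 6
      norm_num [h₁] at hc₁
  all_goals rw [dist_sq_eq_re_im]; norm_num; ring_nf; norm_num

theorem isPreconnected_setOf_dist_eq {E : Type*} [NormedAddCommGroup E] [NormedSpace ℝ E]
    (hE : 1 < Module.rank ℝ E) (r : ℝ) : IsPreconnected {p : E × E | dist p.1 p.2 = r} := by
  have : {p : E × E | dist p.1 p.2 = r} =
      (fun p : E × E => (p.1, p.1 + p.2)) '' (Set.univ ×ˢ Metric.sphere 0 r) := by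
    ext ⟨x, y⟩
    simp only [Set.mem_ofPred_eq, Set.mem_image, Set.mem_prod, Set.mem_univ, true_and,
      mem_sphere_zero_iff_norm, Prod.mk.injEq, Prod.exists]
    constructor
    · rintro rfl
      exact ⟨x, y - x, by rw [dist_eq_norm'], rfl, add_sub_cancel x y⟩
    · rintro ⟨a, b, rfl, rfl, rfl⟩
      rw [dist_self_add_right]
  rw [this]
  exact (isPreconnected_univ.prod (isPreconnected_sphere hE 0 r)).image _ (by fun_prop)

theorem preservesDistSq_three (hf : Continuous f) (h1 : PreservesDistSq f 1) :
    PreservesDistSq f 3 := by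
  have hS : ∀ x y : ℂ, dist x y ^ 2 = 3 → (x, y) ∈ {p : ℂ × ℂ | dist p.1 p.2 = √3} :=
    fun x y hxy => by rw [Set.mem_ofPred_eq, ← hxy, Real.sqrt_sq dist_nonneg]
  have hsq : Set.EqOn (fun p : ℂ × ℂ => (2 * phi2 (f p.1) (f p.2) - 3) ^ 2) (fun _ => 3 ^ 2)
      {p | dist p.1 p.2 = √3} := fun p hp => by
    have hp : dist p.1 p.2 ^ 2 = 3 := by rw [hp, Real.sq_sqrt (by norm_num)]
    linear_combination 4 * phi2_mul_phi2_sub_three h1 p.1 p.2 hp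
  have hconn := isPreconnected_setOf_dist_eq (E := ℂ) (by simp [Complex.rank_real_complex]) √3
  rcases hconn.eq_or_eq_neg_of_sq_eq (f := fun p => 2 * phi2 (f p.1) (f p.2) - 3)
    (g := fun _ => 3) (by fun_prop) continuousOn_const (fun p hp => by simpa using hsq hp)
    (fun _ => by norm_num) with h | h
  · intro x y hxy
    have := h (hS x y hxy)
    push_cast
    linear_combination this / 2
  · refine absurd (fun x y hxy => ?_) (not_phi2EqOn_three_zero h1)
    have := h (hS x y hxy)
    simp only [Pi.neg_apply] at this
    linear_combination this / 2

theorem preservesDistSq_four (h1 : PreservesDistSq f 1) (h3 : PreservesDistSq f 3) :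
    PreservesDistSq f 4 := by
  refine forall_dist_sq_eq_of_isometry fun g hg => ?_
  obtain ⟨c, hc⟩ : ∃ c, phi2 (f (g 0)) (f (g √4)) = c := ⟨_, rfl⟩
  have h₁ : (c - 1) * (c - 4) = 0 := by
    have h := cayleyMenger_eq_zero f (g 0) (g 1) (g ⟨1 / 2, √3 / 2⟩) (g √4)
      (h1 _ _ ?_) (h1 _ _ ?_) hc (h1 _ _ ?_) (h1 _ _ ?_) (h3 _ _ ?_)
    · unfold cayleyMenger at h
      push_cast at h
      linear_combination (-1 / 2) * h
    all_goals rw [hg.dist_eq, dist_sq_eq_re_im]; norm_num [div_pow]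
  have h₂ : (c - 4) * (c - 7) = 0 := by
    have h := cayleyMenger_eq_zero f (g 0) (g ⟨1 / 2, √3 / 2⟩) (g ⟨3 / 2, √3 / 2⟩) (g √4)
      (h1 _ _ ?_) (h3 _ _ ?_) hc (h1 _ _ ?_) (h3 _ _ ?_) (h1 _ _ ?_)
    · unfold cayleyMenger at h
      push_cast at h
      linear_combination (-1 / 2) * h
    all_goals rw [hg.dist_eq, dist_sq_eq_re_im]; norm_num [div_pow]
  rw [hc]
  push_cast
  linear_combination (h₁ - h₂) / 6

theorem dist_sq_two_mul_sub (p q z : ℂ) :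
    dist p (2 * q - z) ^ 2 = 2 * dist p q ^ 2 + 2 * dist q z ^ 2 - dist p z ^ 2 := by
  simp only [dist_sq_eq_re_im, Complex.sub_re, Complex.sub_im, Complex.mul_re, Complex.mul_im,
    Complex.re_ofNat, Complex.im_ofNat]
  ring

/-- Apollonius' theorem, transported by `f`: `q` is the midpoint of `z` and `2q - z`. -/
theorem phi2_add_phi2_two_mul_sub (h1 : PreservesDistSq f 1) (h4 : PreservesDistSq f 4)
    (p : ℂ) {q z : ℂ} (hqz : dist q z ^ 2 = 1) :
    phi2 (f p) (f z) + phi2 (f p) (f (2 * q - z)) = 2 * phi2 (f p) (f q) + 2 := by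
  have hzz' : dist z (2 * q - z) = 2 * dist q z := by
    rw [dist_eq_norm, dist_eq_norm', show z - (2 * q - z) = 2 * (z - q) by ring, norm_mul]
    norm_num
  have hz'q : dist (2 * q - z) q = dist q z := by
    rw [dist_eq_norm, dist_eq_norm]; ring_nf
  have h := cayleyMenger_eq_zero f p z (2 * q - z) q rfl rfl rfl
    (h4 _ _ (by rw [hzz', mul_pow, hqz]; norm_num)) (h1 _ _ (by rwa [dist_comm]))
    (h1 _ _ (by rwa [hz'q]))
  unfold cayleyMenger at h
  push_cast at h
  have : (phi2 (f p) (f z) + phi2 (f p) (f (2 * q - z)) - 2 * phi2 (f p) (f q) - 2) ^ 2 = 0 := by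
    linear_combination (-1 / 2) * h
  linear_combination pow_eq_zero_iff two_ne_zero |>.1 this

/-- The hypothesis is the triangle inequality for the radii `√t`, `√u` and the distance of the
centres, in Heron's squared form. -/
theorem exists_dist_sq_eq_dist_sq (x y : ℂ) {t u : ℝ} (hu : 0 ≤ u)
    (h : (dist x y ^ 2 + t - u) ^ 2 ≤ 4 * dist x y ^ 2 * t) :
    ∃ z, dist x z ^ 2 = t ∧ dist y z ^ 2 = u := by
  obtain ⟨g, hg, rfl, hgy⟩ := exists_isometry_zero_dist x y
  generalize hd : dist (g 0) y = d at h hgy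
  set ξ := (d ^ 2 + t - u) / (2 * d)
  have hξ : 2 * d * ξ = d ^ 2 + t - u ∧ ξ ^ 2 ≤ t := by
    rcases (hd ▸ dist_nonneg : 0 ≤ d).eq_or_lt with hd | hd
    · -- `ξ = 0` here, by the convention `x / 0 = 0`
      subst hd
      have : t = u := by nlinarith
      simp [ξ, this, hu]
    · have hξ : 2 * d * ξ = d ^ 2 + t - u := mul_div_cancel₀ _ (by positivity)
      refine ⟨hξ, le_of_mul_le_mul_left ?_ (by positivity : 0 < 4 * d ^ 2)⟩
      calc 4 * d ^ 2 * ξ ^ 2 = (2 * d * ξ) ^ 2 := by ring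
        _ ≤ 4 * d ^ 2 * t := hξ ▸ h
  have hη := Real.sq_sqrt (sub_nonneg.2 hξ.2)
  refine ⟨g ⟨ξ, √(t - ξ ^ 2)⟩, ?_, ?_⟩
  · rw [hg.dist_eq, dist_sq_eq_re_im]
    simp [hη]
  · rw [← hgy, hg.dist_eq, dist_sq_eq_re_im]
    simp only [Complex.ofReal_re, Complex.ofReal_im, zero_sub, even_two, Even.neg_pow, hη]
    linear_combination -hξ.1

theorem preservesDistSq_median (h1 : PreservesDistSq f 1) (h4 : PreservesDistSq f 4)
    {s δ : ℝ} (hδ : δ ^ 2 ≤ 4 * s) (h_add : PreservesDistSq f (s + 1 + δ))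
    (h_sub : PreservesDistSq f (s + 1 - δ)) : PreservesDistSq f s := by
  intro p q hpq
  obtain ⟨z, hpz, hqz⟩ := exists_dist_sq_eq_dist_sq p q (t := s + 1 + δ) zero_le_one
    (by rw [hpq]; nlinarith)
  have hpz' : dist p (2 * q - z) ^ 2 = s + 1 - δ := by
    rw [dist_sq_two_mul_sub, hpq, hqz, hpz]; ring
  have h := phi2_add_phi2_two_mul_sub h1 h4 p hqz
  rw [h_add _ _ hpz, h_sub _ _ hpz'] at h
  push_cast at h
  linear_combination -h / 2

theorem preservesDistSq_side (h1 : PreservesDistSq f 1) (h4 : PreservesDistSq f 4)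
    {s δ : ℝ} (hδ : δ ^ 2 ≤ 4 * s) (hs : PreservesDistSq f s)
    (h_sub : PreservesDistSq f (s + 1 - δ)) : PreservesDistSq f (s + 1 + δ) := by
  intro p z hpz
  obtain ⟨q, hpq, hzq⟩ := exists_dist_sq_eq_dist_sq p z (t := s) zero_le_one
    (by rw [hpz]; nlinarith)
  rw [dist_comm] at hzq
  have hpz' : dist p (2 * q - z) ^ 2 = s + 1 - δ := by
    rw [dist_sq_two_mul_sub, hpq, hzq, hpz]; ring
  have h := phi2_add_phi2_two_mul_sub h1 h4 p hzq
  rw [hs _ _ hpq, h_sub _ _ hpz'] at h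
  push_cast at h ⊢
  linear_combination h

theorem preservesDistSq_of_nonpos {X : Type*} [MetricSpace X] (f : X → Fin 2 → ℂ) {s : ℝ}
    (hs : s ≤ 0) : PreservesDistSq f s := by
  intro x y hxy
  have hxy' : dist x y = 0 := pow_eq_zero_iff two_ne_zero |>.1 (by linarith [sq_nonneg (dist x y)])
  rw [dist_eq_zero.1 hxy', phi2_self, ← hxy, hxy']
  simp

theorem preservesDistSq_natCast (h1 : PreservesDistSq f 1) (h3 : PreservesDistSq f 3) (n : ℕ) :
    PreservesDistSq f n := by
  have h4 := preservesDistSq_four h1 h3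
  induction n using Nat.strong_induction_on with
  | _ n ih =>
    match n, ih with
    | 0, _ => exact preservesDistSq_of_nonpos f (by simp)
    | 1, _ => simpa using h1
    | 2, _ =>
      refine preservesDistSq_median h1 h4 (s := 2) (δ := 0) (by norm_num) ?_ ?_ <;> norm_num [h3]
    | 3, _ => simpa using h3
    | n + 4, ih =>
      have := preservesDistSq_side h1 h4 (s := n + 1) (δ := 2) (by linarith)
        (by exact_mod_cast ih (n + 1) (by omega)) (by convert ih n (by omega) using 1; ring)
      convert this using 1
      push_cast
      ring

theorem preservesDistSq_div_two_pow (h1 : PreservesDistSq f 1) (h3 : PreservesDistSq f 3)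
    (q n : ℕ) : PreservesDistSq f (n / 2 ^ q) := by
  induction q generalizing n with
  | zero => simpa using preservesDistSq_natCast h1 h3 n
  | succ q ih =>
    obtain ⟨m, rfl | rfl⟩ := Nat.even_or_odd' n
    · convert ih m using 1
      push_cast
      field_simp
      ring
    · refine preservesDistSq_median h1 (preservesDistSq_four h1 h3) (δ := 1 / 2 ^ (q + 1))
        ?_ ?_ ?_
      · have hδ₀ : (0 : ℝ) ≤ 1 / 2 ^ (q + 1) := by positivity
        have hδ₁ : (1 : ℝ) / 2 ^ (q + 1) ≤ 1 := by
          rw [div_le_one (by positivity)]; exact one_le_pow₀ one_le_two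
        have hδs : (1 : ℝ) / 2 ^ (q + 1) ≤ ((2 * m + 1 : ℕ) : ℝ) / 2 ^ (q + 1) := by
          gcongr; exact_mod_cast Nat.le_add_left 1 _
        nlinarith
      · convert ih (m + 1 + 2 ^ q) using 1
        push_cast; field_simp; ring
      · convert ih (m + 2 ^ q) using 1
        push_cast; field_simp; ring

theorem PreservesDistSq.of_tendsto {E : Type*} [NormedAddCommGroup E] [NormedSpace ℝ E]
    {F : E → Fin 2 → ℂ} (hF : Continuous F) {s : ℕ → ℝ} {t : ℝ} (ht : 0 < t)
    (hs₀ : ∀ k, 0 ≤ s k) (hs : Tendsto s atTop (𝓝 t)) (h : ∀ k, PreservesDistSq F (s k)) :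
    PreservesDistSq F t := by
  intro x y hxy
  set c : ℕ → ℝ := fun k => √(s k / t)
  have hdist : ∀ k, dist x (x + c k • (y - x)) ^ 2 = s k := fun k => by
    rw [dist_self_add_right, norm_smul, mul_pow, Real.norm_eq_abs, sq_abs,
      Real.sq_sqrt (div_nonneg (hs₀ k) ht.le), ← dist_eq_norm', hxy, div_mul_cancel₀ _ ht.ne']
  have hc : Tendsto c atTop (𝓝 1) := by
    simpa [div_self ht.ne'] using (hs.div_const t).sqrt
  have hy : Tendsto (fun k => x + c k • (y - x)) atTop (𝓝 y) := by
    simpa using (tendsto_const_nhds (x := x)).add (hc.smul_const (y - x))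
  have hval : (fun k => phi2 (F x) (F (x + c k • (y - x)))) = fun k => (s k : ℂ) :=
    funext fun k => h k _ _ (hdist k)
  refine tendsto_nhds_unique ((((continuous_const.phi2 hF).tendsto y).comp hy)) ?_
  rw [Function.comp_def, hval]
  exact (Complex.continuous_ofReal.tendsto t).comp hs

theorem preservesDistSq_of_continuous (hf : Continuous f) (h1 : PreservesDistSq f 1) (t : ℝ) :
    PreservesDistSq f t := by
  rcases le_or_gt t 0 with ht | ht
  · exact preservesDistSq_of_nonpos f ht
  have h3 := preservesDistSq_three hf h1
  exact PreservesDistSq.of_tendsto hf ht (fun k => by dsimp; positivity)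
    ((tendsto_nat_floor_mul_div_atTop ht.le).comp (tendsto_pow_atTop_atTop_of_one_lt one_lt_two))
    fun k => preservesDistSq_div_two_pow h1 h3 k _

end UnitDistance

theorem continuous_unit_preserving_preserves_all_distances
    (f : EuclideanSpace ℝ (Fin 2) → (Fin 2 → ℂ)) (hf : Continuous f)
    (h1 : ∀ x y : EuclideanSpace ℝ (Fin 2), dist x y = 1 → phi2 (f x) (f y) = 1) :
    ∀ d : ℝ, 0 ≤ d → ∀ x y : EuclideanSpace ℝ (Fin 2), dist x y = d →
      phi2 (f x) (f y) = (d : ℂ) ^ 2 := by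
  intro d _ x y hxy
  let e : ℂ ≃ₗᵢ[ℝ] EuclideanSpace ℝ (Fin 2) := Complex.orthonormalBasisOneI.repr
  have h1' : UnitDistance.PreservesDistSq f 1 := fun x y hxy => by
    rw [h1 x y ((pow_eq_one_iff_of_nonneg dist_nonneg two_ne_zero).1 hxy), Complex.ofReal_one]
  have h := (UnitDistance.preservesDistSq_of_continuous (hf.comp e.continuous)
    (h1'.comp_isometry e.isometry) (d ^ 2)).comp_isometry e.symm.isometry
  simpa using h x y (by rw [hxy])
end
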